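/- Let γ ≥ 1 and δ ∈ [0,1], let ρ and σ be states on ℂ^n, and let 𝓜 be a set of measurement operators (each M ∈ 𝓜 satisfies 0 ≤ M ≤ I) whose symmetrized set 𝓜₂ is nonempty. If E_γ^𝓜(ρ‖σ) ≤ δ and E_γ^𝓜(σ‖ρ) ≤ δ, then E_1^𝓜(ρ‖σ) ≤ (γ − 1 + 2δ)/(γ + 1). -/

import Mathlib

noncomputable section
open Matrix ComplexOrder

/-- Square complex matrices of size `n`. -/
abbrev Mat (n : ℕ) := Matrix (Fin n) (Fin n) ℂ

/-- A quantum state: positive semidefinite with unit trace. -/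
def IsState {n : ℕ} (ρ : Mat n) : Prop := ρ.PosSemidef ∧ ρ.trace = 1

/-- The symmetrized measurement set 𝓜₂ := {M ∈ 𝓜 : I − M ∈ 𝓜}. -/
def M2 {n : ℕ} (𝓜 : Set (Mat n)) : Set (Mat n) := {M | M ∈ 𝓜 ∧ (1 - M) ∈ 𝓜}

/-- Measured hockey-stick divergence for γ ≥ 1:
`E_γ^𝓜(ρ‖σ) = sup_{M ∈ 𝓜₂} Tr[M(ρ − γσ)]`. -/
def Emeas {n : ℕ} (γ : ℝ) (𝓜 : Set (Mat n)) (ρ σ : Mat n) : ℝ :=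
  sSup ((fun M => ((M * (ρ - (γ : ℂ) • σ)).trace).re) '' M2 𝓜)

/-! For `M ∈ 𝓜₂` both `M` and `I − M` are admissible, so with `p = Tr[Mρ]`, `q = Tr[Mσ]` the two
constraints give `p − γq ≤ δ` and `(1 − q) − γ(1 − p) ≤ δ`; their sum is
`(γ + 1)(p − q) ≤ γ − 1 + 2δ`. The bounds `p, q ∈ [0, 1]` serve only to make the suprema finite,
without which `sSup` would take its junk value `0`. -/

section Trace

variable {n : ℕ}

lemma re_trace_nonneg_of_posSemidef {A : Mat n} (hA : A.PosSemidef) : 0 ≤ A.trace.re :=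
  (Complex.le_def.mp hA.trace_nonneg).1

open scoped MatrixOrder in
lemma re_trace_mul_nonneg_of_posSemidef {A B : Mat n} (hA : A.PosSemidef) (hB : B.PosSemidef) :
    0 ≤ (A * B).trace.re := by
  have h_cycle : (A * B).trace = (CFC.sqrt B * A * CFC.sqrt B).trace := by
    conv_lhs => rw [← CFC.sqrt_mul_sqrt_self B hB.nonneg, ← Matrix.mul_assoc, trace_mul_cycle]
  have h_psd : (CFC.sqrt B * A * CFC.sqrt B).PosSemidef := by
    have h := hA.mul_mul_conjTranspose_same (CFC.sqrt B)
    rwa [(CFC.sqrt_nonneg B).posSemidef.1] at h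
  exact h_cycle ▸ re_trace_nonneg_of_posSemidef h_psd

lemma re_trace_one_sub_mul_of_isState {M ρ : Mat n} (hρ : IsState ρ) :
    ((1 - M) * ρ).trace.re = 1 - (M * ρ).trace.re := by
  rw [Matrix.sub_mul, Matrix.one_mul, trace_sub, hρ.2, Complex.sub_re, Complex.one_re]

lemma re_trace_mul_sub_smul (γ : ℝ) (M ρ σ : Mat n) :
    (M * (ρ - (γ : ℂ) • σ)).trace.re = (M * ρ).trace.re - γ * (M * σ).trace.re := by
  rw [Matrix.mul_sub, trace_sub, Matrix.mul_smul, trace_smul, Complex.sub_re, smul_eq_mul,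
    Complex.re_ofReal_mul]

lemma re_trace_mul_mem_Icc_of_isState {M ρ : Mat n} (hM : M.PosSemidef)
    (hM' : (1 - M).PosSemidef) (hρ : IsState ρ) : (M * ρ).trace.re ∈ Set.Icc 0 1 := by
  refine ⟨re_trace_mul_nonneg_of_posSemidef hM hρ.1, ?_⟩
  have := re_trace_mul_nonneg_of_posSemidef hM' hρ.1
  rw [re_trace_one_sub_mul_of_isState hρ] at this
  linarith

end Trace

section Emeas

variable {n : ℕ} {𝓜 : Set (Mat n)}

lemma one_sub_mem_M2 {M : Mat n} (hM : M ∈ M2 𝓜) : 1 - M ∈ M2 𝓜 :=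
  ⟨hM.2, by simpa using hM.1⟩

lemma bddAbove_image_M2 (h𝓜 : ∀ M ∈ 𝓜, M.PosSemidef ∧ (1 - M).PosSemidef) {γ : ℝ}
    (hγ : 0 ≤ γ) {ρ σ : Mat n} (hρ : IsState ρ) (hσ : IsState σ) :
    BddAbove ((fun M => (M * (ρ - (γ : ℂ) • σ)).trace.re) '' M2 𝓜) := by
  refine ⟨1, ?_⟩
  rintro _ ⟨M, hM, rfl⟩
  obtain ⟨hMpos, hMle⟩ := h𝓜 M hM.1
  have hρM := re_trace_mul_mem_Icc_of_isState hMpos hMle hρ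
  have hσM := re_trace_mul_mem_Icc_of_isState hMpos hMle hσ
  simp only [re_trace_mul_sub_smul]
  nlinarith [hρM.2, hσM.1]

lemma re_trace_mul_sub_smul_le_Emeas (h𝓜 : ∀ M ∈ 𝓜, M.PosSemidef ∧ (1 - M).PosSemidef)
    {γ : ℝ} (hγ : 0 ≤ γ) {ρ σ : Mat n} (hρ : IsState ρ) (hσ : IsState σ) {M : Mat n}
    (hM : M ∈ M2 𝓜) :
    (M * ρ).trace.re - γ * (M * σ).trace.re ≤ Emeas γ 𝓜 ρ σ := by
  rw [← re_trace_mul_sub_smul]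
  exact le_csSup (bddAbove_image_M2 h𝓜 hγ hρ hσ) ⟨M, hM, rfl⟩

end Emeas

theorem stmt_11_general {n : ℕ} (γ δ : ℝ) (hγ : 1 ≤ γ)
    (ρ σ : Mat n) (hρ : IsState ρ) (hσ : IsState σ) (𝓜 : Set (Mat n))
    (h𝓜 : ∀ M ∈ 𝓜, M.PosSemidef ∧ ((1 : Mat n) - M).PosSemidef)
    (hne : (M2 𝓜).Nonempty)
    (h₁ : Emeas γ 𝓜 ρ σ ≤ δ) (h₂ : Emeas γ 𝓜 σ ρ ≤ δ) :
    Emeas 1 𝓜 ρ σ ≤ (γ - 1 + 2 * δ) / (γ + 1) := by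
  have hγ₀ : 0 ≤ γ := by linarith
  refine csSup_le (hne.image _) ?_
  rintro _ ⟨M, hM, rfl⟩
  have hρσ := re_trace_mul_sub_smul_le_Emeas h𝓜 hγ₀ hρ hσ hM
  have hσρ := re_trace_mul_sub_smul_le_Emeas h𝓜 hγ₀ hσ hρ (one_sub_mem_M2 hM)
  rw [re_trace_one_sub_mul_of_isState hσ, re_trace_one_sub_mul_of_isState hρ] at hσρ
  simp only [re_trace_mul_sub_smul, one_mul]
  rw [le_div_iff₀ (by linarith)]
  linarith

/-- Contraction of the measured trace distance under restricted QLDP constraints. -/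
theorem stmt_11 {n : ℕ} (γ δ : ℝ) (hγ : 1 ≤ γ) (hδ : δ ∈ Set.Icc (0 : ℝ) 1)
    (ρ σ : Mat n) (hρ : IsState ρ) (hσ : IsState σ) (𝓜 : Set (Mat n))
    (h𝓜 : ∀ M ∈ 𝓜, M.PosSemidef ∧ ((1 : Mat n) - M).PosSemidef)
    (hne : (M2 𝓜).Nonempty)
    (h₁ : Emeas γ 𝓜 ρ σ ≤ δ) (h₂ : Emeas γ 𝓜 σ ρ ≤ δ) :
    Emeas 1 𝓜 ρ σ ≤ (γ - 1 + 2 * δ) / (γ + 1) :=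
  stmt_11_general γ δ hγ ρ σ hρ hσ 𝓜 h𝓜 hne h₁ h₂
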